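/- If the merge graph L₃ = [[w₁L₁ + w₂d₂I, −w₂A₂],[−w₂A₂, w₁L₁ + w₂d₂I]] (with all quantities integer, both Laplacians diagonalized by the same Hadamard) has PST from a vertex p ∈ {1,…,n} to a vertex q ∈ {n+1,…,2n} at time π/2, then w₂ and d₂ are both odd. -/

import Mathlib

open Matrix

/-- Perfect state transfer at time π/2 for an integer Hamiltonian `L`. -/
noncomputable def pstHalfPi {m : Type*} [Fintype m] [DecidableEq m]
    (L : Matrix m m ℤ) (j k : m) : Prop :=
  ‖((NormedSpace.exp ((Complex.I * ((Real.pi / 2 : ℝ) : ℂ)) •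
        L.map (fun x => (x : ℂ)))) j k)‖ = 1

/-!
Conjugation by `K = [[H, H], [H, -H]]`, for which `K Kᵀ = 2n`, diagonalises `L₃ = [[B, C], [C, B]]`:
the eigenvalues are those of `B + C = w₁L₁ + w₂L₂` on the symmetric half and those of
`B - C = w₁L₁ + w₂(2d₂ - L₂)` on the antisymmetric half, namely `f = w₁Λ₁ + w₂Λ₂` and
`g = w₁Λ₁ + 2w₂d₂ - w₂Λ₂`. Hence the `(p, n + q)` entry of `exp (i(π/2)L₃)` is
`(2n)⁻¹ ∑ₗ H p ℓ H q ℓ (exp (iπfₗ/2) - exp (iπgₗ/2))`. If `w₂d₂` were even, then, `Λ₂` being even,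
`g - f = 2w₂d₂ - 2w₂Λ₂ ≡ 0 mod 4`, every term vanishes and there is no state transfer.
-/

namespace Matrix

section Blocks

variable {m R : Type*} [Fintype m] [DecidableEq m] [CommRing R]

theorem fromBlocks_neg_mul_diagonal_mul_transpose (H : Matrix m m R) (φ ψ : m → R) :
    fromBlocks H H H (-H) * diagonal (Sum.elim φ ψ) * (fromBlocks H H H (-H))ᵀ =
      fromBlocks (H * diagonal φ * Hᵀ + H * diagonal ψ * Hᵀ)
        (H * diagonal φ * Hᵀ - H * diagonal ψ * Hᵀ) (H * diagonal φ * Hᵀ - H * diagonal ψ * Hᵀ)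
        (H * diagonal φ * Hᵀ + H * diagonal ψ * Hᵀ) := by
  simp only [← fromBlocks_diagonal, fromBlocks_transpose, fromBlocks_multiply, transpose_neg,
    Matrix.mul_zero, Matrix.mul_neg, Matrix.neg_mul, neg_neg, add_zero, zero_add, sub_eq_add_neg]

theorem fromBlocks_neg_mul_transpose_self {H : Matrix m m R} {N : R} (hH : H * Hᵀ = N • 1) :
    fromBlocks H H H (-H) * (fromBlocks H H H (-H))ᵀ = (2 * N) • 1 := by
  simp only [fromBlocks_transpose, fromBlocks_multiply, transpose_neg, Matrix.mul_neg,
    Matrix.neg_mul, neg_neg, hH, ← fromBlocks_one, fromBlocks_smul, add_neg_cancel, smul_zero]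
  congr 1 <;> module

theorem two_mul_smul_fromBlocks_eq_mul_diagonal_mul_transpose {H B C : Matrix m m R} {N : R}
    {α β : m → R} (hsum : N • (B + C) = H * diagonal α * Hᵀ)
    (hdiff : N • (B - C) = H * diagonal β * Hᵀ) :
    (2 * N) • fromBlocks B C C B =
      fromBlocks H H H (-H) * diagonal (Sum.elim α β) * (fromBlocks H H H (-H))ᵀ := by
  rw [fromBlocks_neg_mul_diagonal_mul_transpose, ← hsum, ← hdiff, fromBlocks_smul]
  congr 1 <;> module

theorem two_mul_smul_merge_eq_mul_diagonal_mul_transpose {H L₁ A₂ : Matrix m m R}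
    {N d₂ w₁ w₂ : R} {Λ₁ Λ₂ : m → R} (hH : H * Hᵀ = N • 1)
    (hL₁ : N • L₁ = H * diagonal Λ₁ * Hᵀ) (hL₂ : N • (d₂ • 1 - A₂) = H * diagonal Λ₂ * Hᵀ) :
    (2 * N) • fromBlocks (w₁ • L₁ + (w₂ * d₂) • 1) (-(w₂ • A₂)) (-(w₂ • A₂))
        (w₁ • L₁ + (w₂ * d₂) • 1) =
      fromBlocks H H H (-H) *
        diagonal (Sum.elim (w₁ • Λ₁ + w₂ • Λ₂) (w₁ • Λ₁ + (2 * (w₂ * d₂)) • 1 - w₂ • Λ₂)) *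
        (fromBlocks H H H (-H))ᵀ := by
  have hadd (α β : m → R) : diagonal (α + β) = diagonal α + diagonal β := (diagonal_add α β).symm
  have hsub (α β : m → R) : diagonal (α - β) = diagonal α - diagonal β := (diagonal_sub α β).symm
  apply two_mul_smul_fromBlocks_eq_mul_diagonal_mul_transpose
  · simp only [hadd, diagonal_smul, Matrix.mul_add, Matrix.add_mul, mul_smul_comm,
      smul_mul_assoc, ← hL₁, ← hL₂]
    module
  · simp only [hadd, hsub, diagonal_smul, show diagonal (1 : m → R) = 1 from diagonal_one,
      Matrix.mul_add, Matrix.add_mul, Matrix.mul_sub, Matrix.sub_mul, mul_smul_comm,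
      smul_mul_assoc, Matrix.mul_one, hH, ← hL₁, ← hL₂]
    module

end Blocks

theorem exp_eq_of_smul_eq_mul_diagonal_mul_transpose {m 𝕜 : Type*} [Fintype m] [DecidableEq m]
    [NormedField 𝕜] [NormedAlgebra ℚ 𝕜] [CompleteSpace 𝕜] {K A : Matrix m m 𝕜} {N : 𝕜}
    {μ : m → 𝕜} (hN : N ≠ 0) (hK : K * Kᵀ = N • 1) (hA : N • A = K * diagonal μ * Kᵀ) :
    NormedSpace.exp A = N⁻¹ • (K * diagonal (NormedSpace.exp μ) * Kᵀ) := by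
  have hinv : K * (N⁻¹ • Kᵀ) = 1 := by
    rw [Matrix.mul_smul, hK, smul_smul, inv_mul_cancel₀ hN, one_smul]
  have hconj : A = K * diagonal μ * K⁻¹ := by
    rw [inv_eq_right_inv hinv, Matrix.mul_smul, ← hA, smul_smul, inv_mul_cancel₀ hN, one_smul]
  rw [hconj, exp_conj _ _ ((isUnit_iff_isUnit_det K).2 (isUnit_det_of_right_inverse hinv)),
    exp_diagonal, inv_eq_right_inv hinv, Matrix.mul_smul]

theorem exp_smul_map_intCast_eq {m : Type*} [Fintype m] [DecidableEq m] {K L : Matrix m m ℤ}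
    {N : ℤ} {μ : m → ℤ} (hN : N ≠ 0) (hK : K * Kᵀ = N • 1) (hL : N • L = K * diagonal μ * Kᵀ)
    (c : ℂ) :
    NormedSpace.exp (c • L.map (Int.cast : ℤ → ℂ)) = (N : ℂ)⁻¹ •
      (K.map Int.cast * diagonal (fun s => Complex.exp (c * μ s)) * (K.map Int.cast)ᵀ) := by
  have hK' := congrArg (Int.castRingHom ℂ).mapMatrix hK
  have hL' := congrArg (Int.castRingHom ℂ).mapMatrix hL
  simp only [map_mul, map_zsmul, map_one, RingHom.mapMatrix_apply, transpose_map,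
    Int.coe_castRingHom, ← Int.cast_smul_eq_zsmul ℂ N] at hK' hL'
  rw [diagonal_map Int.cast_zero] at hL'
  refine (exp_eq_of_smul_eq_mul_diagonal_mul_transpose (μ := fun s => c * μ s)
    (Int.cast_ne_zero.2 hN) hK' ?_).trans ?_
  · rw [smul_comm, hL', ← smul_mul_assoc, ← mul_smul_comm, ← diagonal_smul]
    rfl
  · simp only [Pi.exp_def, Complex.exp_eq_exp_ℂ]

end Matrix

theorem Complex.exp_I_mul_pi_div_two_mul_intCast_eq_of_modEq {a b : ℤ} (h : a ≡ b [ZMOD 4]) :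
    Complex.exp (Complex.I * ((Real.pi / 2 : ℝ) : ℂ) * a) =
      Complex.exp (Complex.I * ((Real.pi / 2 : ℝ) : ℂ) * b) := by
  obtain ⟨k, hk⟩ := Int.modEq_iff_dvd.mp h
  have hb : Complex.I * ((Real.pi / 2 : ℝ) : ℂ) * b =
      Complex.I * ((Real.pi / 2 : ℝ) : ℂ) * a + k * (2 * Real.pi * Complex.I) := by
    rw [show b = a + 4 * k by omega]
    push_cast
    ring
  rw [hb, Complex.exp_add, Complex.exp_int_mul_two_pi_mul_I, mul_one]

theorem merge_pst_cross_forces_odd_general (n : ℕ)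
    (H : Matrix (Fin n) (Fin n) ℤ)
    (hH : H * Hᵀ = (n : ℤ) • 1)
    (L₁ A₂ : Matrix (Fin n) (Fin n) ℤ) (d₂ w₁ w₂ : ℤ)
    (Λ₁ Λ₂ : Fin n → ℤ)
    (hL₁ : (n : ℤ) • L₁ = H * Matrix.diagonal Λ₁ * Hᵀ)
    (hL₂ : (n : ℤ) • (d₂ • (1 : Matrix (Fin n) (Fin n) ℤ) - A₂) =
      H * Matrix.diagonal Λ₂ * Hᵀ)
    (heven₂ : ∀ ℓ, Even (Λ₂ ℓ))
    
    (L₃ : Matrix (Fin n ⊕ Fin n) (Fin n ⊕ Fin n) ℤ)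
    (hL₃ : L₃ = Matrix.fromBlocks
      (w₁ • L₁ + (w₂ * d₂) • (1 : Matrix (Fin n) (Fin n) ℤ)) (-(w₂ • A₂))
      (-(w₂ • A₂)) (w₁ • L₁ + (w₂ * d₂) • (1 : Matrix (Fin n) (Fin n) ℤ)))
    (p q : Fin n)
    (hpst : pstHalfPi L₃ (Sum.inl p) (Sum.inr q)) :
    Odd w₂ ∧ Odd d₂ := by
  refine Int.odd_mul.mp (Int.not_even_iff_odd.mp fun heven => ?_)
  set c : ℂ := Complex.I * ((Real.pi / 2 : ℝ) : ℂ)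
  set f := w₁ • Λ₁ + w₂ • Λ₂
  set g := w₁ • Λ₁ + (2 * (w₂ * d₂)) • (1 : Fin n → ℤ) - w₂ • Λ₂
  have hfg (ℓ : Fin n) : Complex.exp (c * f ℓ) = Complex.exp (c * g ℓ) := by
    obtain ⟨a, ha⟩ := heven
    obtain ⟨b, hb⟩ := heven₂ ℓ
    refine Complex.exp_I_mul_pi_div_two_mul_intCast_eq_of_modEq
      (Int.modEq_iff_dvd.mpr ⟨a - w₂ * b, ?_⟩)
    simp only [f, g, Pi.add_apply, Pi.sub_apply, Pi.smul_apply, Pi.one_apply, smul_eq_mul]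
    linear_combination 2 * ha - 2 * w₂ * hb
  have hexp := exp_smul_map_intCast_eq (by have := p.pos; omega)
    (fromBlocks_neg_mul_transpose_self hH)
    (hL₃ ▸ two_mul_smul_merge_eq_mul_diagonal_mul_transpose hH hL₁ hL₂) c
  have hdiag : (fun s => Complex.exp (c * (Sum.elim f g s : ℤ))) =
      Sum.elim (fun ℓ => Complex.exp (c * f ℓ)) (fun ℓ => Complex.exp (c * f ℓ)) := by
    ext (ℓ | ℓ) <;> simp [hfg]
  rw [pstHalfPi, hexp, hdiag, fromBlocks_map, Matrix.map_neg _ Int.cast_neg,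
    fromBlocks_neg_mul_diagonal_mul_transpose, sub_self] at hpst
  simp at hpst

theorem merge_pst_cross_forces_odd (n : ℕ) [NeZero n]
    (H : Matrix (Fin n) (Fin n) ℤ)
    (hent : ∀ u v, H u v = 1 ∨ H u v = -1)
    (hH : H * Hᵀ = (n : ℤ) • 1)
    (hrow : ∀ v, H 0 v = 1) (hcol : ∀ u, H u 0 = 1)
    (L₁ A₂ : Matrix (Fin n) (Fin n) ℤ) (d₂ w₁ w₂ : ℤ)
    (Λ₁ Λ₂ : Fin n → ℤ)
    (hL₁ : (n : ℤ) • L₁ = H * Matrix.diagonal Λ₁ * Hᵀ)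
    (hL₂ : (n : ℤ) • (d₂ • (1 : Matrix (Fin n) (Fin n) ℤ) - A₂) =
      H * Matrix.diagonal Λ₂ * Hᵀ)
    (heven₁ : ∀ ℓ, Even (Λ₁ ℓ)) (heven₂ : ∀ ℓ, Even (Λ₂ ℓ))
    
    (L₃ : Matrix (Fin n ⊕ Fin n) (Fin n ⊕ Fin n) ℤ)
    (hL₃ : L₃ = Matrix.fromBlocks
      (w₁ • L₁ + (w₂ * d₂) • (1 : Matrix (Fin n) (Fin n) ℤ)) (-(w₂ • A₂))
      (-(w₂ • A₂)) (w₁ • L₁ + (w₂ * d₂) • (1 : Matrix (Fin n) (Fin n) ℤ)))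
    (p q : Fin n)
    (hpst : pstHalfPi L₃ (Sum.inl p) (Sum.inr q)) :
    Odd w₂ ∧ Odd d₂ :=
  merge_pst_cross_forces_odd_general n H hH L₁ A₂ d₂ w₁ w₂ Λ₁ Λ₂ hL₁ hL₂ heven₂ L₃ hL₃ p q hpst
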